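/- Let $d \geq 1$, and define the sequence of $T$-spaces $S_n^{(d)}$ of $k_0\langle X\rangle$ by $S_1^{(d)} = \{S^{(d)}\}^S$ and $S_{n+1}^{(d)} = (S_n^{(d)} S_1^{(d)})^S$. Then: (i) for all $m, n \geq 1$, $(S_m^{(d)} S_n^{(d)})^S = S_{m+n}^{(d)}$; and (ii) for all $m \geq 1$, $S_{2m+1}^{(d)} \subseteq S_{m+1}^{(d)} + S_1^{(d)}$. -/

import Mathlib

/-!
Since every `S_n` is a T-space, `(U V)^S` is just the linear span of `U V` for `U, V` among them,
so (i) is associativity of this product. Then `S_{2m+1} = S_m S_1 S_m`, and (ii) asks that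
`f S(y) g ∈ S_{m+1} + S_1` for `f, g ∈ S_m`. Expanding `S^{(d+1)}(a, z)` according to the
position of `a` gives `a S(z) ≡ S^{(d+1)}(a, z) ≡ S(z) a` modulo values of `S = S^{(d)}`, and
`S^{(d+1)}` is symmetric. Hence, modulo `S_{m+1} + S_1`,

  f S(y) g ≡ f S(g, y_1, …) = f S(y_1, g, …) ≡ (f y_1) S(g, …) ≡ S(g, f y_1, …) ≡ g S(f y_1, …),

and the last term lies in `S_m S_1 ⊆ S_{m+1}`.
-/

open scoped BigOperators

/-- The free non-unital associative algebra over `k` on countably many variables,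
realized as the semigroup algebra of the free semigroup on `ℕ`. -/
abbrev FA (k : Type*) [Field k] := MonoidAlgebra k (FreeSemigroup ℕ)

/-- The generator (variable) `x_i`. -/
noncomputable def Xg (k : Type*) [Field k] (i : ℕ) : FA k :=
  MonoidAlgebra.single (FreeSemigroup.of i) 1

/-- Product of a (nonempty) list in a non-unital semiring; `0` on the empty list. -/
def lprod {A : Type*} [NonUnitalSemiring A] : List A → A
  | [] => 0
  | [a] => a
  | a :: b :: l => a * lprod (b :: l)

/-- `n`-th power in a non-unital semiring (zero for `n = 0`). -/
def npow' {A : Type*} [NonUnitalSemiring A] (a : A) (n : ℕ) : A :=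
  lprod (List.replicate n a)

/-- The full multilinear symmetrization `S^{(d)}(y_1,…,y_d) = ∑_{σ ∈ Σ_d} y_{σ(1)} ⋯ y_{σ(d)}`. -/
def Ssym {A : Type*} [NonUnitalSemiring A] (d : ℕ) (y : Fin d → A) : A :=
  ∑ σ : Equiv.Perm (Fin d), lprod (List.ofFn (fun i => y (σ i)))

/-- A T-space: a subspace closed under all substitution endomorphisms
(non-unital algebra endomorphisms). -/
def IsTSpace (k : Type*) [Field k] (V : Submodule k (FA k)) : Prop :=
  ∀ (φ : FA k →ₙₐ[k] FA k), ∀ v ∈ V, φ v ∈ V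

/-- The T-space generated by a set `S`: the span of all substitution instances
of elements of `S`. -/
noncomputable def TSpan (k : Type*) [Field k] (S : Set (FA k)) : Submodule k (FA k) :=
  Submodule.span k {a | ∃ (φ : FA k →ₙₐ[k] FA k) (s : FA k), s ∈ S ∧ a = φ s}

/-- The set of products `u * v` with `u ∈ U`, `v ∈ V`. -/
def mulSet {k : Type*} [Field k] (U V : Submodule k (FA k)) : Set (FA k) :=
  {a | ∃ u ∈ U, ∃ v ∈ V, a = u * v}

/-- The T-spaces `S_n^{(d)}`: `S_1^{(d)}` is generated by `S^{(d)}(x_1,…,x_d)` and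
`S_{n+1}^{(d)} = (S_n^{(d)} S_1^{(d)})^S`. -/
noncomputable def Sn (k : Type*) [Field k] (d : ℕ) : ℕ → Submodule k (FA k)
  | 0 => ⊥
  | 1 => TSpan k {Ssym d (fun i => Xg k i)}
  | (n+2) => TSpan k (mulSet (Sn k d (n+1)) (Sn k d 1))

/-- The T-spaces `H_n`: `H_1` is generated by `x_1^p` and `H_{n+1} = (H_n H_1)^S`. -/
noncomputable def Hn (k : Type*) [Field k] (p : ℕ) : ℕ → Submodule k (FA k)
  | 0 => ⊥
  | 1 => TSpan k {npow' (Xg k 0) p}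
  | (n+2) => TSpan k (mulSet (Hn k p (n+1)) (Hn k p 1))

/-- The word `x_1^p x_2^p ⋯ x_n^p`. -/
noncomputable def hword (k : Type*) [Field k] (p n : ℕ) : FA k :=
  lprod ((List.range n).map (fun t => npow' (Xg k t) p))

section Words

variable {A : Type*} [NonUnitalSemiring A]

theorem lprod_cons_of_ne_nil (a : A) {l : List A} (hl : l ≠ []) :
    lprod (a :: l) = a * lprod l := by
  cases l with
  | nil => exact absurd rfl hl
  | cons b t => rfl

theorem lprod_cons_cons (x y : A) (l : List A) : lprod (x :: y :: l) = lprod (x * y :: l) := by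
  cases l with
  | nil => rfl
  | cons b t => simp only [lprod, mul_assoc]

theorem lprod_ofFn_cons {n : ℕ} (a : A) (v : Fin (n + 1) → A) :
    lprod (List.ofFn (Fin.cons a v : Fin (n + 2) → A)) = a * lprod (List.ofFn v) := by
  rw [List.ofFn_cons, lprod_cons_of_ne_nil a (by simp)]

theorem lprod_ofFn_insertNth_succ (a : A) {n : ℕ} (v : Fin (n + 1) → A) (j : Fin (n + 1)) :
    lprod (List.ofFn (Fin.insertNth j.succ a v))
      = lprod (List.ofFn (Function.update v j (v j * a))) := by
  cases v using Fin.consCases with | cons b t =>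
  cases j using Fin.cases with
  | zero =>
    rw [Fin.insertNth_succ_cons, Fin.insertNth_zero', Fin.update_cons_zero, Fin.cons_zero,
      List.ofFn_cons, List.ofFn_cons, List.ofFn_cons, lprod_cons_cons]
  | succ i =>
    cases n with
    | zero => exact i.elim0
    | succ n =>
      rw [Fin.insertNth_succ_cons, Fin.cons_succ, ← Fin.cons_update, lprod_ofFn_cons,
        lprod_ofFn_cons, lprod_ofFn_insertNth_succ]

theorem lprod_ofFn_insertNth_castSucc (a : A) {n : ℕ} (v : Fin (n + 1) → A) (j : Fin (n + 1)) :
    lprod (List.ofFn (Fin.insertNth j.castSucc a v))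
      = lprod (List.ofFn (Function.update v j (a * v j))) := by
  cases v using Fin.consCases with | cons b t =>
  cases j using Fin.cases with
  | zero =>
    rw [Fin.castSucc_zero, Fin.insertNth_zero', Fin.update_cons_zero, Fin.cons_zero,
      List.ofFn_cons, List.ofFn_cons, List.ofFn_cons, lprod_cons_cons]
  | succ i =>
    cases n with
    | zero => exact i.elim0
    | succ n =>
      rw [← Fin.succ_castSucc, Fin.insertNth_succ_cons, Fin.cons_succ, ← Fin.cons_update,
        lprod_ofFn_cons, lprod_ofFn_cons, lprod_ofFn_insertNth_castSucc]

theorem lprod_append_singleton (x : A) {l : List A} (hl : l ≠ []) :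
    lprod (l ++ [x]) = lprod l * x := by
  induction l with
  | nil => exact absurd rfl hl
  | cons b t ih =>
    cases t with
    | nil => rfl
    | cons c s =>
      rw [List.cons_append, lprod_cons_of_ne_nil b (by simp), ih (by simp),
        lprod_cons_of_ne_nil b (by simp), mul_assoc]

theorem lprod_ofFn_snoc {n : ℕ} (a : A) (v : Fin (n + 1) → A) :
    lprod (List.ofFn (Fin.snoc v a : Fin (n + 2) → A)) = lprod (List.ofFn v) * a := by
  rw [List.ofFn_succ', List.concat_eq_append, lprod_append_singleton _ (by simp)]
  simp

end Words

theorem map_lprod {A B F : Type*} [NonUnitalSemiring A] [NonUnitalSemiring B] [FunLike F A B]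
    [NonUnitalRingHomClass F A B] (φ : F) : ∀ l : List A, φ (lprod l) = lprod (l.map φ)
  | [] => map_zero φ
  | [_] => rfl
  | a :: b :: l => by
    change φ (a * lprod (b :: l)) = φ a * lprod ((b :: l).map φ)
    rw [map_mul, map_lprod φ (b :: l)]

def Equiv.Perm.insertZeroAt {e : ℕ} (k : Fin (e + 1)) (σ : Equiv.Perm (Fin e)) :
    Equiv.Perm (Fin (e + 1)) :=
  Equiv.Perm.decomposeFin.symm (0, σ) * Fin.cycleRange k

namespace Equiv.Perm

@[simp]
theorem insertZeroAt_apply_self {e : ℕ} (k : Fin (e + 1)) (σ : Perm (Fin e)) :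
    insertZeroAt k σ k = 0 := by
  simp [insertZeroAt]

@[simp]
theorem insertZeroAt_apply_succAbove {e : ℕ} (k : Fin (e + 1)) (σ : Perm (Fin e)) (j : Fin e) :
    insertZeroAt k σ (k.succAbove j) = (σ j).succ := by
  simp [insertZeroAt, decomposeFin_symm_apply_succ]

theorem bijective_insertZeroAt (e : ℕ) :
    Function.Bijective fun p : Fin (e + 1) × Perm (Fin e) => insertZeroAt p.1 p.2 := by
  rw [Fintype.bijective_iff_injective_and_card]
  refine ⟨?_, by simp [Fintype.card_perm, Nat.factorial_succ]⟩
  rintro ⟨k, σ⟩ ⟨k', σ'⟩ h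
  dsimp only at h
  obtain rfl : k = k' := (insertZeroAt k' σ').injective <| by
    rw [insertZeroAt_apply_self, ← h, insertZeroAt_apply_self]
  refine Prod.ext rfl (Equiv.ext fun j => Fin.succ_injective _ ?_)
  simpa using congr($h (k.succAbove j))

end Equiv.Perm

section Symmetrization

variable {A : Type*} [NonUnitalSemiring A]

theorem Ssym_comp_perm {d : ℕ} (y : Fin d → A) (π : Equiv.Perm (Fin d)) :
    Ssym d (y ∘ π) = Ssym d y :=
  Fintype.sum_equiv (Equiv.mulLeft π) _ _ fun _ => rfl

theorem Ssym_cons_cons_comm {n : ℕ} (a b : A) (t : Fin n → A) :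
    Ssym (n + 2) (Fin.cons a (Fin.cons b t)) = Ssym (n + 2) (Fin.cons b (Fin.cons a t)) := by
  rw [← Ssym_comp_perm _ (Equiv.swap 0 1)]
  congr 1
  ext i
  cases i using Fin.cases with
  | zero => simp
  | succ i =>
    cases i using Fin.cases with
    | zero => simp
    | succ i => simp [Equiv.swap_apply_of_ne_of_ne, Fin.succ_succ_ne_one]

theorem Ssym_cons_eq_sum_insertNth {e : ℕ} (a : A) (w : Fin e → A) :
    Ssym (e + 1) (Fin.cons a w)
      = ∑ k : Fin (e + 1), ∑ σ : Equiv.Perm (Fin e),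
          lprod (List.ofFn (Fin.insertNth k a (w ∘ σ))) := by
  rw [← Fintype.sum_prod_type', Ssym]
  refine (Fintype.sum_bijective _ (Equiv.Perm.bijective_insertZeroAt e) _ _ ?_).symm
  rintro ⟨k, σ⟩
  congr 2
  ext i
  cases i using Fin.succAboveCases k <;> simp

theorem sum_sum_lprod_ofFn_update_comp {m : ℕ} (g : A → A) (z : Fin m → A) :
    ∑ j : Fin m, ∑ σ : Equiv.Perm (Fin m),
        lprod (List.ofFn (Function.update (z ∘ σ) j (g (z (σ j)))))
      = ∑ i : Fin m, Ssym m (Function.update z i (g (z i))) := by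
  simp only [Ssym]
  rw [Finset.sum_comm]
  conv_rhs => rw [Finset.sum_comm]
  refine Finset.sum_congr rfl fun σ _ => ?_
  rw [← Equiv.sum_comp σ
    (fun i => lprod (List.ofFn fun l => Function.update z i (g (z i)) (σ l)))]
  refine Finset.sum_congr rfl fun j _ => ?_
  congr 2
  ext i
  simp [Function.update_apply, σ.injective.eq_iff]

theorem Ssym_cons_eq_mul_add {n : ℕ} (a : A) (z : Fin (n + 1) → A) :
    Ssym (n + 2) (Fin.cons a z)
      = a * Ssym (n + 1) z + ∑ i, Ssym (n + 1) (Function.update z i (z i * a)) := by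
  rw [Ssym_cons_eq_sum_insertNth, Fin.sum_univ_succ]
  congr 1
  · simp only [Fin.insertNth_zero', lprod_ofFn_cons, Ssym, Finset.mul_sum]
    rfl
  · simp only [lprod_ofFn_insertNth_succ]
    exact sum_sum_lprod_ofFn_update_comp (· * a) z

theorem Ssym_cons_eq_add_mul {n : ℕ} (a : A) (z : Fin (n + 1) → A) :
    Ssym (n + 2) (Fin.cons a z)
      = ∑ i, Ssym (n + 1) (Function.update z i (a * z i)) + Ssym (n + 1) z * a := by
  rw [Ssym_cons_eq_sum_insertNth, Fin.sum_univ_castSucc]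
  congr 1
  · simp only [lprod_ofFn_insertNth_castSucc]
    exact sum_sum_lprod_ofFn_update_comp (a * ·) z
  · simp only [Fin.insertNth_last', lprod_ofFn_snoc, Ssym, Finset.sum_mul]
    rfl

end Symmetrization

theorem map_Ssym {A B F : Type*} [NonUnitalSemiring A] [NonUnitalSemiring B] [FunLike F A B]
    [NonUnitalRingHomClass F A B] (φ : F) (d : ℕ) (y : Fin d → A) :
    φ (Ssym d y) = Ssym d (φ ∘ y) := by
  simp only [Ssym, map_sum, map_lprod, List.map_ofFn]
  rfl

section Congruence

variable {A : Type*} [NonUnitalRing A] {W : AddSubgroup A} {n : ℕ}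

theorem mul_Ssym_sub_Ssym_cons_mem (hW : ∀ z, Ssym (n + 1) z ∈ W) (a : A)
    (z : Fin (n + 1) → A) : a * Ssym (n + 1) z - Ssym (n + 2) (Fin.cons a z) ∈ W := by
  rw [Ssym_cons_eq_mul_add, sub_add_cancel_left]
  exact neg_mem (sum_mem fun _ _ => hW _)

theorem Ssym_mul_sub_Ssym_cons_mem (hW : ∀ z, Ssym (n + 1) z ∈ W) (a : A)
    (z : Fin (n + 1) → A) : Ssym (n + 1) z * a - Ssym (n + 2) (Fin.cons a z) ∈ W := by
  rw [Ssym_cons_eq_add_mul, sub_add_cancel_right]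
  exact neg_mem (sum_mem fun _ _ => hW _)

theorem mul_Ssym_mul_mem {V : AddSubgroup A} {f g : A}
    (hV : ∀ z, Ssym (n + 1) z ∈ V) (hf : ∀ z, f * Ssym (n + 1) z ∈ V)
    (hg : ∀ z, g * Ssym (n + 1) z ∈ V) (y : Fin (n + 1) → A) :
    f * Ssym (n + 1) y * g ∈ V := by
  let W : AddSubgroup A := V ⊓ V.comap (AddMonoidHom.mulLeft f)
  have hW : ∀ z, Ssym (n + 1) z ∈ W := fun z => ⟨hV z, hf z⟩
  have hfW : ∀ x ∈ W, f * x ∈ V := fun _ hx => hx.2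
  cases y using Fin.consCases with | cons b t =>
  have e : f * Ssym (n + 1) (Fin.cons b t) * g
      = f * (Ssym (n + 1) (Fin.cons b t) * g - Ssym (n + 2) (Fin.cons g (Fin.cons b t)))
        - f * (b * Ssym (n + 1) (Fin.cons g t) - Ssym (n + 2) (Fin.cons b (Fin.cons g t)))
        + (f * b * Ssym (n + 1) (Fin.cons g t) - Ssym (n + 2) (Fin.cons (f * b) (Fin.cons g t)))
        - (g * Ssym (n + 1) (Fin.cons (f * b) t)
            - Ssym (n + 2) (Fin.cons g (Fin.cons (f * b) t)))
        + g * Ssym (n + 1) (Fin.cons (f * b) t) := by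
    rw [Ssym_cons_cons_comm g b, Ssym_cons_cons_comm (f * b) g]
    noncomm_ring
  rw [e]
  refine add_mem (sub_mem (add_mem (sub_mem ?_ ?_) ?_) ?_) (hg _)
  · exact hfW _ (Ssym_mul_sub_Ssym_cons_mem hW g _)
  · exact hfW _ (mul_Ssym_sub_Ssym_cons_mem hW b _)
  · exact mul_Ssym_sub_Ssym_cons_mem hV (f * b) _
  · exact mul_Ssym_sub_Ssym_cons_mem hV g _

end Congruence

open Pointwise in
/-- The non-unital analogue of `Submodule.mul`, which needs a `Semiring`. -/
def Submodule.spanMul {R A : Type*} [CommSemiring R] [NonUnitalSemiring A] [Module R A]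
    (U V : Submodule R A) : Submodule R A :=
  Submodule.span R ((U : Set A) * (V : Set A))

namespace Submodule

variable {R A : Type*} [CommSemiring R] [NonUnitalSemiring A] [Module R A]
  {U V W P : Submodule R A}

theorem mul_mem_spanMul {u v : A} (hu : u ∈ U) (hv : v ∈ V) : u * v ∈ spanMul U V :=
  subset_span (Set.mul_mem_mul hu hv)

theorem spanMul_le : spanMul U V ≤ P ↔ ∀ u ∈ U, ∀ v ∈ V, u * v ∈ P := by
  simp [spanMul, span_le, Set.mul_subset_iff]

variable [IsScalarTower R A A]

theorem spanMul_spanMul_le (h : ∀ u ∈ U, ∀ v ∈ V, ∀ w ∈ W, u * v * w ∈ P) :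
    spanMul (spanMul U V) W ≤ P :=
  spanMul_le.2 fun _ hx w hw =>
    (spanMul_le (P := P.comap (LinearMap.mulRight R w)) |>.2 fun u hu v hv => h u hu v hv w hw) hx

variable [SMulCommClass R A A]

theorem spanMul_assoc : spanMul (spanMul U V) W = spanMul U (spanMul V W) := by
  refine le_antisymm (spanMul_spanMul_le fun u hu v hv w hw => ?_)
    (spanMul_le.2 fun u hu x hx => ?_)
  · rw [mul_assoc]
    exact mul_mem_spanMul hu (mul_mem_spanMul hv hw)
  · refine (spanMul_le (P := (spanMul (spanMul U V) W).comap (LinearMap.mulLeft R u)) |>.2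
      (fun v hv w hw => ?_)) hx
    simpa [mul_assoc] using mul_mem_spanMul (mul_mem_spanMul hu hv) hw

end Submodule

section TSpace

variable {k : Type*} [Field k]

theorem mem_TSpan_of_mem {S : Set (FA k)} {s : FA k} (hs : s ∈ S) : s ∈ TSpan k S :=
  Submodule.subset_span ⟨NonUnitalAlgHom.id k (FA k), s, hs, rfl⟩

theorem isTSpace_TSpan (S : Set (FA k)) : IsTSpace k (TSpan k S) := by
  intro φ v hv
  induction hv using Submodule.span_induction with
  | mem x hx =>
    obtain ⟨ψ, s, hs, rfl⟩ := hx
    exact Submodule.subset_span ⟨φ.comp ψ, s, hs, rfl⟩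
  | zero => simp
  | add x y _ _ hx hy => simpa using add_mem hx hy
  | smul c x _ hx => simpa using Submodule.smul_mem _ c hx

theorem TSpan_mulSet_eq_spanMul {U V : Submodule k (FA k)} (hU : IsTSpace k U)
    (hV : IsTSpace k V) : TSpan k (mulSet U V) = U.spanMul V := by
  refine le_antisymm (Submodule.span_le.2 ?_) (Submodule.span_le.2 ?_)
  · rintro _ ⟨φ, _, ⟨u, hu, v, hv, rfl⟩, rfl⟩
    rw [map_mul]
    exact Submodule.mul_mem_spanMul (hU φ u hu) (hV φ v hv)
  · rintro _ ⟨u, hu, v, hv, rfl⟩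
    exact mem_TSpan_of_mem ⟨u, hu, v, hv, rfl⟩

end TSpace

section Sn

variable {k : Type*} [Field k]

noncomputable def substitution (z : ℕ → FA k) : FA k →ₙₐ[k] FA k :=
  MonoidAlgebra.liftMagma k (FreeSemigroup.lift z)

theorem substitution_Xg (z : ℕ → FA k) (i : ℕ) : substitution z (Xg k i) = z i := by
  simp [substitution, Xg, MonoidAlgebra.liftMagma_apply_apply]

theorem Sn_one_eq_span (d : ℕ) : Sn k d 1 = Submodule.span k (Set.range (Ssym d)) := by
  classical
  rw [Sn]
  refine le_antisymm (Submodule.span_le.2 ?_) (Submodule.span_le.2 ?_)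
  · rintro _ ⟨φ, _, rfl, rfl⟩
    exact Submodule.subset_span ⟨_, (map_Ssym φ d _).symm⟩
  · rintro _ ⟨z, rfl⟩
    let z' : ℕ → FA k := fun i => if h : i < d then z ⟨i, h⟩ else 0
    refine Submodule.subset_span ⟨substitution z', _, rfl, ?_⟩
    rw [map_Ssym]
    congr
    ext i
    simp [z', substitution_Xg]

theorem Ssym_mem_Sn_one (d : ℕ) (z : Fin d → FA k) : Ssym d z ∈ Sn k d 1 := by
  rw [Sn_one_eq_span]
  exact Submodule.subset_span ⟨z, rfl⟩

theorem isTSpace_Sn (d : ℕ) : ∀ n, IsTSpace k (Sn k d n)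
  | 0 => fun φ v hv => by
    rw [Sn, Submodule.mem_bot] at hv ⊢
    rw [hv, map_zero]
  | 1 => by rw [Sn]; exact isTSpace_TSpan _
  | _ + 2 => by rw [Sn]; exact isTSpace_TSpan _

theorem Sn_succ (d : ℕ) {n : ℕ} (hn : 1 ≤ n) :
    Sn k d (n + 1) = (Sn k d n).spanMul (Sn k d 1) := by
  obtain ⟨n, rfl⟩ := Nat.exists_eq_add_of_le' hn
  rw [Sn.eq_3]
  exact TSpan_mulSet_eq_spanMul (isTSpace_Sn (k := k) d _) (isTSpace_Sn d _)

theorem spanMul_Sn (d : ℕ) {m n : ℕ} (hm : 1 ≤ m) (hn : 1 ≤ n) :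
    (Sn k d m).spanMul (Sn k d n) = Sn k d (m + n) := by
  induction n, hn using Nat.le_induction with
  | base => exact (Sn_succ d hm).symm
  | succ n hn ih =>
    rw [Sn_succ d hn, ← Submodule.spanMul_assoc, ih, ← add_assoc,
      Sn_succ d (n := m + n) (by omega)]

theorem mul_mul_mem_Sn_succ_sup_Sn_one {d m : ℕ} (hd : 1 ≤ d)
    (hm : 1 ≤ m) {f c g : FA k} (hf : f ∈ Sn k d m) (hc : c ∈ Sn k d 1)
    (hg : g ∈ Sn k d m) :
    f * c * g ∈ Sn k d (m + 1) ⊔ Sn k d 1 := by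
  obtain ⟨n, rfl⟩ := Nat.exists_eq_add_of_le' hd
  set V := Sn k (n + 1) (m + 1) ⊔ Sn k (n + 1) 1
  have hV : ∀ z, Ssym (n + 1) z ∈ V := fun z => Submodule.mem_sup_right (Ssym_mem_Sn_one _ z)
  have hmul : ∀ x ∈ Sn k (n + 1) m, ∀ z, x * Ssym (n + 1) z ∈ V := fun x hx z =>
    Submodule.mem_sup_left <| by
      rw [Sn_succ _ hm]
      exact Submodule.mul_mem_spanMul hx (Ssym_mem_Sn_one _ z)
  rw [Sn_one_eq_span] at hc
  refine (Submodule.span_le (p := V.comap ((LinearMap.mulRight k g).comp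
    (LinearMap.mulLeft k f)))).2 ?_ hc
  rintro _ ⟨y, rfl⟩
  exact mul_Ssym_mul_mem (V := V.toAddSubgroup) hV (hmul f hf) (hmul g hg) y

end Sn

theorem Sn_mul_and_odd_general (k : Type*) [Field k]
    (d : ℕ) (hd : 1 ≤ d) :
    (∀ m n : ℕ, 1 ≤ m → 1 ≤ n →
        TSpan k (mulSet (Sn k d m) (Sn k d n)) = Sn k d (m + n)) ∧
    (∀ m : ℕ, 1 ≤ m → Sn k d (2 * m + 1) ≤ Sn k d (m + 1) ⊔ Sn k d 1) := by
  refine ⟨fun m n hm hn => ?_, fun m hm => ?_⟩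
  · rw [TSpan_mulSet_eq_spanMul (isTSpace_Sn d m) (isTSpace_Sn d n), spanMul_Sn d hm hn]
  · have h : Sn k d (2 * m + 1) = ((Sn k d m).spanMul (Sn k d 1)).spanMul (Sn k d m) := by
      rw [spanMul_Sn d hm le_rfl, spanMul_Sn d (by omega) hm, two_mul, add_right_comm]
    rw [h]
    exact Submodule.spanMul_spanMul_le fun f hf c hc g hg =>
      mul_mul_mem_Sn_succ_sup_Sn_one hd hm hf hc hg

/-- (i) `(S_m^{(d)} S_n^{(d)})^S = S_{m+n}^{(d)}` for all `m, n ≥ 1`, and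
(ii) `S_{2m+1}^{(d)} ⊆ S_{m+1}^{(d)} + S_1^{(d)}` for all `m ≥ 1`. -/
theorem Sn_mul_and_odd (k : Type*) [Field k] (p : ℕ) (hp : p.Prime) [CharP k p]
    (d : ℕ) (hd : 1 ≤ d) :
    (∀ m n : ℕ, 1 ≤ m → 1 ≤ n →
        TSpan k (mulSet (Sn k d m) (Sn k d n)) = Sn k d (m + n)) ∧
    (∀ m : ℕ, 1 ≤ m → Sn k d (2 * m + 1) ≤ Sn k d (m + 1) ⊔ Sn k d 1) :=
  Sn_mul_and_odd_general k d hd
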